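/- Let (W,S) be a Coxeter system, L = I∪J∪K with I,J,K pairwise disjoint and disconnected, σ : W_I → W_J, x ↦ x* a Coxeter isomorphism, and M the set of all elements minimal in their coset modulo W_K W_{I,J}. If w ∈ M and y ∈ W satisfy y_L ≤_R w_L (right weak order on the W_L-parts of the parabolic decompositions), then y ∈ M. -/

import Mathlib

/-!
Write `L = I ∪ J ∪ K`. The elements of `M` are exactly the products `c · g · σ(z)` with
`c ∈ W^L`, `g, z ∈ W_I` and `ℓ(g z⁻¹) = ℓ(g) + ℓ(z)`: the representative of the coset in
`W^{J∪K}` is then `c · g z⁻¹`. Since `W_L = W_I × W_J × W_K` with additive length, `d ≤_R g σ(z)`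
forces `d = d₁ σ(z')` with `d₁ ≤_R g` and `z' ≤_R z`, and the triangle inequality applied to
`g z⁻¹ = (g d₁⁻¹)(d₁ z'⁻¹)(z z'⁻¹)⁻¹` gives `ℓ(d₁ z'⁻¹) = ℓ(d₁) + ℓ(z')`.

The Coxeter-theoretic input is the strong exchange condition, which comes from the
representation of `W` on `W × {±1}` in which `s` conjugates the first coordinate and flips the
sign of the pair `(s, ε)`. From it follow the deletion condition, reduced words inside standard
parabolic subgroups, and `ℓ(u v) = ℓ(u) + ℓ(v)` for `u ∈ W^L`, `v ∈ W_L`.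
-/

section BruhatSetup

variable {B : Type*} {W : Type*} [Group W] {M : CoxeterMatrix B}

/-- Strong Bruhat order: `u ≤ v` iff every reduced word for `v` has a sublist
that is a reduced word for `u`. -/
def BruhatLE (cs : CoxeterSystem M W) (u v : W) : Prop :=
  ∀ ω : List B, cs.IsReduced ω → cs.wordProd ω = v →
    ∃ ω' : List B, List.Sublist ω' ω ∧ cs.IsReduced ω' ∧ cs.wordProd ω' = u

/-- Strict strong Bruhat order. -/
def BruhatLT (cs : CoxeterSystem M W) (u v : W) : Prop :=
  BruhatLE cs u v ∧ u ≠ v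

/-- The standard parabolic subgroup `W_L` generated by the simple reflections in `L`. -/
def parab (cs : CoxeterSystem M W) (L : Set B) : Subgroup W :=
  Subgroup.closure (cs.simple '' L)

/-- The set `W^L` of minimal length coset representatives for `W / W_L`. -/
def minReps (cs : CoxeterSystem M W) (L : Set B) : Set W :=
  {w : W | ∀ i ∈ L, cs.length w < cs.length (w * cs.simple i)}

/-- Right weak order: `v ≤_R w` iff `ℓ(w) = ℓ(w v⁻¹) + ℓ(v)`. -/
def leR (cs : CoxeterSystem M W) (v w : W) : Prop :=
  cs.length w = cs.length (w * v⁻¹) + cs.length v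

/-- The setup of the order `≤_O`: `I`, `J`, `K` are pairwise disjoint and pairwise
disconnected subsets of the simple system (so that `W_{I∪J∪K} = W_I × W_J × W_K`),
and `σ : x ↦ x*` restricts to an isomorphism of Coxeter groups `W_I → W_J`
(a bijective group homomorphism sending simple reflections to simple reflections). -/
structure GoodSetup (cs : CoxeterSystem M W) (I J K : Set B) (σ : W → W) : Prop where
  disjIJ : Disjoint I J
  disjIK : Disjoint I K
  disjJK : Disjoint J K
  commIJ : ∀ i ∈ I, ∀ j ∈ J, Commute (cs.simple i) (cs.simple j)
  commIK : ∀ i ∈ I, ∀ k ∈ K, Commute (cs.simple i) (cs.simple k)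
  commJK : ∀ j ∈ J, ∀ k ∈ K, Commute (cs.simple j) (cs.simple k)
  directProd : ∀ x ∈ parab cs I, ∀ y ∈ parab cs J, ∀ z ∈ parab cs K,
    x * y * z = 1 → x = 1 ∧ y = 1 ∧ z = 1
  mulSigma : ∀ x ∈ parab cs I, ∀ y ∈ parab cs I, σ (x * y) = σ x * σ y
  bijSigma : Set.BijOn σ (parab cs I : Set W) (parab cs J : Set W)
  simpleSigma : ∀ i ∈ I, ∃ j ∈ J, σ (cs.simple i) = cs.simple j

/-- Membership in the coset `[w] = w · W_K · W_{I,J}` where `W_{I,J} = {x x* : x ∈ W_I}`. -/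
def inCoset (cs : CoxeterSystem M W) (I K : Set B) (σ : W → W) (w u : W) : Prop :=
  ∃ a ∈ parab cs K, ∃ x ∈ parab cs I, u = w * a * (x * σ x)

/-- The relation `≤_O`: `w' ≤_O w` iff some `u ∈ [w']` satisfies `u ≤ w` in Bruhat order. -/
def leO (cs : CoxeterSystem M W) (I K : Set B) (σ : W → W) (w' w : W) : Prop :=
  ∃ u, inCoset cs I K σ w' u ∧ BruhatLE cs u w

/-- The strict relation associated to `≤_O`. -/
def ltO (cs : CoxeterSystem M W) (I K : Set B) (σ : W → W) (w' w : W) : Prop :=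
  leO cs I K σ w' w ∧ w' ≠ w

/-- `Min(w)`: the elements of the coset `[w]` of length `ℓ(w)`. -/
def MinC (cs : CoxeterSystem M W) (I K : Set B) (σ : W → W) (w : W) : Set W :=
  {u : W | inCoset cs I K σ w u ∧ cs.length u = cs.length w}

/-- The set `M` of all elements having minimal length in their coset mod `W_K W_{I,J}`. -/
def Mset (cs : CoxeterSystem M W) (I J K : Set B) (σ : W → W) : Set W :=
  {u : W | ∃ w ∈ minReps cs (J ∪ K), u ∈ MinC cs I K σ w}

theorem List.even_count_map_range_two_mul {α : Type*} [DecidableEq α] (f : ℕ → α) (m : ℕ)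
    (hf : ∀ k, f (m + k) = f k) (a : α) : Even (((range (2 * m)).map f).count a) := by
  rw [two_mul, range_add, map_append, map_map, count_append]
  simp only [Function.comp_def, hf]
  exact ⟨_, rfl⟩

namespace CoxeterSystem

open List

variable (cs : CoxeterSystem M W)

local prefix:100 "s" => cs.simple
local prefix:100 "π" => cs.wordProd
local prefix:100 "ℓ" => cs.length
local prefix:100 "lis " => cs.leftInvSeq

section ReflectionRepresentation

open scoped Classical

theorem simple_mul_mul_simple_eq_simple_iff (i : B) (t : W) : s i * t * s i = s i ↔ t = s i := by
  constructor
  · intro h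
    simpa [mul_assoc] using congrArg (fun g => s i * g * s i) h
  · rintro rfl
    simp

noncomputable def reflPerm (i : B) : Equiv.Perm (W × ℤˣ) :=
  Function.Involutive.toPerm (fun p => (s i * p.1 * s i, if p.1 = s i then -p.2 else p.2)) <| by
    rintro ⟨t, ε⟩
    simp only [Prod.mk.injEq, simple_mul_mul_simple_eq_simple_iff]
    split_ifs <;> simp [mul_assoc]

theorem reflPerm_apply (i : B) (t : W) (ε : ℤˣ) :
    cs.reflPerm i (t, ε) = (s i * t * s i, if t = s i then -ε else ε) :=
  rfl

theorem prod_map_reflPerm_apply (ω : List B) (t : W) (ε : ℤˣ) :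
    (ω.map cs.reflPerm).prod (t, ε) =
      (π ω * t * (π ω)⁻¹, ε * (-1) ^ (lis ω).count (π ω * t * (π ω)⁻¹)) := by
  induction ω with
  | nil => simp
  | cons i ω ih =>
    set t' := π ω * t * (π ω)⁻¹
    have hconj : π (i :: ω) * t * (π (i :: ω))⁻¹ = MulAut.conj (s i) t' := by
      simp only [wordProd_cons, MulAut.conj_apply, mul_inv_rev, t']
      group
    have hlis : lis (i :: ω) = s i :: (lis ω).map (MulAut.conj (s i)) := rfl
    rw [map_cons, prod_cons, Equiv.Perm.mul_apply, ih, hconj, hlis, count_cons,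
      count_map_of_injective _ _ (MulAut.conj (s i)).injective]
    simp only [reflPerm_apply, MulAut.conj_apply, inv_simple,
      beq_iff_eq, eq_comm (a := s i), simple_mul_mul_simple_eq_simple_iff]
    split_ifs <;> simp [pow_succ]

theorem leftInvSeq_alternatingWord (i j : B) (p : ℕ) :
    lis (alternatingWord i j (2 * p)) = (range (2 * p)).map fun k => s i * (s j * s i) ^ k := by
  refine ext_getElem (by simp) fun k hk _ => ?_
  rw [getElem_leftInvSeq_alternatingWord cs i j p k (by simpa using hk),
    prod_alternatingWord_eq_mul_pow, getElem_map, getElem_range]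
  simp [Nat.mul_add_div]

theorem isLiftable_reflPerm : M.IsLiftable cs.reflPerm := by
  intro i j
  have hword : ∀ n, (cs.reflPerm i * cs.reflPerm j) ^ n =
      ((alternatingWord i j (2 * n)).map cs.reflPerm).prod := by
    intro n
    induction n with
    | zero => simp [alternatingWord]
    | succ n ih =>
      rw [pow_succ', ih, show 2 * (n + 1) = 2 * n + 1 + 1 by ring, alternatingWord_succ',
        alternatingWord_succ']
      simp [mul_assoc]
  ext ⟨t, ε⟩ : 1
  -- The left inversion sequence of the alternating word of length `2 m` runs twice through the
  -- `m` reflections of the dihedral subgroup, so every sign is flipped an even number of times.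
  rw [hword, prod_map_reflPerm_apply, prod_alternatingWord_eq_mul_pow, leftInvSeq_alternatingWord]
  have hper : ∀ k, s i * (s j * s i) ^ (M i j + k) = s i * (s j * s i) ^ k := by
    intro k
    rw [pow_add, simple_mul_simple_pow', one_mul]
  simp [simple_mul_simple_pow,
    (List.even_count_map_range_two_mul (fun k => s i * (s j * s i) ^ k) _ hper t).neg_one_pow]

noncomputable def reflRep : W →* Equiv.Perm (W × ℤˣ) :=
  cs.lift ⟨cs.reflPerm, cs.isLiftable_reflPerm⟩

theorem reflRep_wordProd_apply (ω : List B) (t : W) (ε : ℤˣ) :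
    cs.reflRep (π ω) (t, ε) =
      (π ω * t * (π ω)⁻¹, ε * (-1) ^ (lis ω).count (π ω * t * (π ω)⁻¹)) := by
  rw [← prod_map_reflPerm_apply, wordProd, map_list_prod, map_map]
  congr 3
  exact funext (cs.lift_apply_simple cs.isLiftable_reflPerm)

theorem reflRep_apply_fst (w t : W) (ε : ℤˣ) : (cs.reflRep w (t, ε)).1 = w * t * w⁻¹ := by
  obtain ⟨ω, rfl⟩ := cs.wordProd_surjective w
  rw [reflRep_wordProd_apply]

theorem reflRep_apply_neg (w t : W) (ε : ℤˣ) :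
    cs.reflRep w (t, -ε) = ((cs.reflRep w (t, ε)).1, -(cs.reflRep w (t, ε)).2) := by
  obtain ⟨ω, rfl⟩ := cs.wordProd_surjective w
  simp only [reflRep_wordProd_apply, neg_mul]

theorem reflRep_apply_self {t : W} (ht : cs.IsReflection t) (ε : ℤˣ) :
    cs.reflRep t (t, ε) = (t, -ε) := by
  obtain ⟨v, i, rfl⟩ := ht
  set ε' := (cs.reflRep v⁻¹ (v * s i * v⁻¹, ε)).2
  have h₁ : cs.reflRep v⁻¹ (v * s i * v⁻¹, ε) = (s i, ε') :=
    Prod.ext (by rw [reflRep_apply_fst]; group) rfl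
  have h₂ : cs.reflRep v (s i, ε') = (v * s i * v⁻¹, ε) := by
    rw [← h₁, ← Equiv.Perm.mul_apply, ← map_mul, mul_inv_cancel, map_one, Equiv.Perm.one_apply]
  have h₃ : cs.reflRep (s i) (s i, ε') = (s i, -ε') := by
    rw [← wordProd_singleton, reflRep_wordProd_apply]
    simp
  rw [map_mul, map_mul, Equiv.Perm.mul_apply, Equiv.Perm.mul_apply, h₁, h₃, reflRep_apply_neg, h₂]

theorem odd_count_leftInvSeq {ω : List B} {t : W} (ht : cs.IsReflection t)
    (hlt : ℓ (t * π ω) < ℓ (π ω)) : Odd ((lis ω).count t) := by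
  -- The sign `reflRep` attaches to `t` is the parity of the occurrences of `t` in the left
  -- inversion sequence of any word; it is even for a reduced word of `t * π ω`, and
  -- multiplying by `t` flips it.
  obtain ⟨ν, hν, hνω⟩ := cs.exists_isReduced (t * π ω)
  have hπω : π ω = t * π ν := by rw [← hνω, ← mul_assoc, ht.mul_self, one_mul]
  have hν0 : (lis ν).count t = 0 := by
    refine count_eq_zero.mpr fun hmem => ?_
    have := (cs.isLeftInversion_of_mem_leftInvSeq hν hmem).2
    rw [← hνω, ← mul_assoc, ht.mul_self, one_mul] at this
    omega
  have hfix : cs.reflRep (π ν) ((π ν)⁻¹ * t * π ν, 1) = (t, 1) := by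
    rw [reflRep_wordProd_apply]
    simp [mul_assoc, hν0]
  have h : cs.reflRep (π ω) ((π ν)⁻¹ * t * π ν, 1) = (t, -1) := by
    rw [hπω, map_mul, Equiv.Perm.mul_apply, hfix, reflRep_apply_self cs ht]
  have hconj : π ω * ((π ν)⁻¹ * t * π ν) * (π ω)⁻¹ = t := by rw [hπω]; group
  rw [reflRep_wordProd_apply, hconj, one_mul, Prod.mk.injEq] at h
  exact (neg_one_pow_eq_neg_one_iff_odd (by decide)).mp h.2

theorem exists_eraseIdx_of_length_mul_lt {ω : List B} {t : W} (ht : cs.IsReflection t)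
    (hlt : ℓ (t * π ω) < ℓ (π ω)) : ∃ j < ω.length, t * π ω = π (ω.eraseIdx j) := by
  obtain ⟨j, hj, rfl⟩ := mem_iff_getElem.mp (count_pos_iff.mp (cs.odd_count_leftInvSeq ht hlt).pos)
  refine ⟨j, by simpa using hj, ?_⟩
  rw [← getD_eq_getElem _ 1 hj, getD_leftInvSeq_mul_wordProd]

end ReflectionRepresentation

theorem exists_eraseIdx_of_length_mul_simple_lt {ω : List B} {i : B}
    (hlt : ℓ (π ω * s i) < ℓ (π ω)) : ∃ j < ω.length, π ω * s i = π (ω.eraseIdx j) := by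
  have hconj : π ω * s i * (π ω)⁻¹ * π ω = π ω * s i := by group
  rw [← hconj] at hlt ⊢
  exact cs.exists_eraseIdx_of_length_mul_lt ((cs.isReflection_simple i).conj _) hlt

theorem exists_reduced_sublist (ω : List B) :
    ∃ ω' : List B, ω' <+ ω ∧ cs.IsReduced ω' ∧ π ω' = π ω := by
  induction ω using reverseRecOn with
  | nil => exact ⟨[], Sublist.slnil, by simp [IsReduced], rfl⟩
  | append_singleton ω i ih =>
    obtain ⟨ω', hsub, hred, hprod⟩ := ih
    have hπ : π (ω ++ [i]) = π ω' * s i := by rw [wordProd_append, wordProd_singleton, hprod]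
    rcases cs.length_mul_simple (π ω') i with hgt | hlt
    · refine ⟨ω' ++ [i], hsub.append (Sublist.refl _), ?_, by rw [hπ, wordProd_append,
        wordProd_singleton]⟩
      rw [IsReduced, wordProd_append, wordProd_singleton, hgt, hred.eq, length_append,
        length_singleton]
    · obtain ⟨j, hj, heq⟩ :=
        cs.exists_eraseIdx_of_length_mul_simple_lt (ω := ω') (i := i) (by omega)
      refine ⟨ω'.eraseIdx j, (eraseIdx_sublist ω' j).trans (hsub.trans (sublist_append_left _ _)),
        ?_, by rw [hπ, heq]⟩
      have := length_eraseIdx_add_one hj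
      rw [IsReduced, ← heq]
      rw [hred.eq] at hlt
      omega

theorem exists_eraseIdx_append_of_length_mul_simple_lt {α β : List B} {i : B}
    (hlt : ℓ (π α * π β * s i) < ℓ (π α * π β)) :
    (∃ j < α.length, π α * π β * s i = π (α.eraseIdx j) * π β) ∨
      ∃ j < β.length, π β * s i = π (β.eraseIdx j) := by
  rw [← wordProd_append] at hlt
  obtain ⟨j, hj, heq⟩ := cs.exists_eraseIdx_of_length_mul_simple_lt hlt
  by_cases hjα : j < α.length
  · rw [eraseIdx_append_of_lt_length hjα, wordProd_append, wordProd_append] at heq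
    exact Or.inl ⟨j, hjα, heq⟩
  · rw [eraseIdx_append_of_length_le (not_lt.mp hjα), wordProd_append, wordProd_append,
      mul_assoc] at heq
    rw [length_append] at hj
    exact Or.inr ⟨j - α.length, by omega, mul_left_cancel heq⟩

section Parabolic

variable {cs} {L P Q : Set B}

theorem simple_mem_parab {i : B} (hi : i ∈ L) : s i ∈ parab cs L :=
  Subgroup.subset_closure ⟨i, hi, rfl⟩

theorem parab_mono (h : P ⊆ Q) : parab cs P ≤ parab cs Q :=
  Subgroup.closure_mono (Set.image_mono h)

theorem wordProd_mem_parab {ω : List B} (h : ∀ b ∈ ω, b ∈ L) : π ω ∈ parab cs L := by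
  induction ω with
  | nil => exact one_mem _
  | cons i ω ih =>
    rw [wordProd_cons]
    exact mul_mem (simple_mem_parab (h i mem_cons_self)) (ih fun b hb => h b (mem_cons_of_mem i hb))

theorem exists_reduced_word_of_mem_parab {w : W} (hw : w ∈ parab cs L) :
    ∃ ω : List B, (∀ b ∈ ω, b ∈ L) ∧ cs.IsReduced ω ∧ π ω = w := by
  suffices ∃ ω : List B, (∀ b ∈ ω, b ∈ L) ∧ π ω = w by
    obtain ⟨ω, hL, rfl⟩ := this
    obtain ⟨ω', hsub, hred, hprod⟩ := cs.exists_reduced_sublist ω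
    exact ⟨ω', fun b hb => hL b (hsub.subset hb), hred, hprod⟩
  induction hw using Subgroup.closure_induction with
  | mem x hx =>
    obtain ⟨i, hi, rfl⟩ := hx
    exact ⟨[i], by simpa using hi, wordProd_singleton cs i⟩
  | one => exact ⟨[], by simp, wordProd_nil cs⟩
  | mul x y _ _ ihx ihy =>
    obtain ⟨ω₁, h₁, rfl⟩ := ihx
    obtain ⟨ω₂, h₂, rfl⟩ := ihy
    exact ⟨ω₁ ++ ω₂, fun b hb => (mem_append.mp hb).elim (h₁ b) (h₂ b), wordProd_append cs ω₁ ω₂⟩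
  | inv x _ ihx =>
    obtain ⟨ω, h, rfl⟩ := ihx
    exact ⟨ω.reverse, fun b hb => h b (mem_reverse.mp hb), wordProd_reverse cs ω⟩

theorem eq_one_of_mem_parab_of_mem_minReps {v : W} (hv : v ∈ parab cs L)
    (hmin : v ∈ minReps cs L) : v = 1 := by
  obtain ⟨ω, hL, hred, rfl⟩ := exists_reduced_word_of_mem_parab hv
  rcases eq_nil_or_concat' ω with rfl | ⟨ω₀, i, rfl⟩
  · rfl
  have hlt := hmin i (hL i (by simp))
  rw [wordProd_append, wordProd_singleton, simple_mul_simple_cancel_right,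
    ← wordProd_singleton, ← wordProd_append, hred.eq, length_append, length_singleton] at hlt
  have := cs.length_wordProd_le ω₀
  omega

theorem mem_minReps_of_mem_parab {x : W} (hx : x ∈ parab cs P)
    (hQ : ∀ q ∈ Q, s q ∉ parab cs P) : x ∈ minReps cs Q := by
  intro q hq
  obtain ⟨α, hαP, -, rfl⟩ := exists_reduced_word_of_mem_parab hx
  refine (cs.length_mul_simple (π α) q).elim (fun h => by omega) fun h => absurd ?_ (hQ q hq)
  obtain ⟨j, -, heq⟩ := cs.exists_eraseIdx_of_length_mul_simple_lt (ω := α) (i := q) (by omega)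
  have hmem : π (α.eraseIdx j) ∈ parab cs P :=
    wordProd_mem_parab fun b hb => hαP b ((eraseIdx_sublist α j).subset hb)
  rw [← heq] at hmem
  simpa using mul_mem (inv_mem (wordProd_mem_parab hαP)) hmem

theorem commute_of_mem_parab (hc : ∀ p ∈ P, ∀ q ∈ Q, Commute (s p) (s q)) {x y : W}
    (hx : x ∈ parab cs P) (hy : y ∈ parab cs Q) : Commute x y := by
  have hle : parab cs P ≤ Subgroup.centralizer (parab cs Q) := by
    rw [parab, Subgroup.closure_le, parab, Subgroup.centralizer_closure]
    rintro _ ⟨p, hp, rfl⟩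
    rw [SetLike.mem_coe, Subgroup.mem_centralizer_iff]
    rintro _ ⟨q, hq, rfl⟩
    exact (hc p hp q hq).eq.symm
  exact (Subgroup.mem_centralizer_iff.mp (hle hx) y hy).symm

theorem exists_mul_of_mem_parab_union (hc : ∀ p ∈ P, ∀ q ∈ Q, Commute (s p) (s q)) {g : W}
    (hg : g ∈ parab cs (P ∪ Q)) : ∃ x ∈ parab cs P, ∃ y ∈ parab cs Q, g = x * y := by
  have hle : parab cs P ≤ Subgroup.normalizer (parab cs Q : Set W) := fun x hx =>
    Subgroup.centralizer_le_normalizer _ (Subgroup.mem_centralizer_iff.mpr fun y hy =>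
      (commute_of_mem_parab hc hx hy).eq.symm)
  have hsup : parab cs (P ∪ Q) = parab cs P ⊔ parab cs Q := by
    rw [parab, Set.image_union, Subgroup.closure_union]
    rfl
  rw [hsup, ← SetLike.mem_coe,
    Subgroup.coe_mul_of_left_le_normalizer_right _ _ hle, Set.mem_mul] at hg
  obtain ⟨x, hx, y, hy, rfl⟩ := hg
  exact ⟨x, hx, y, hy, rfl⟩

theorem length_mul_of_forall_length_le {u : W} (hu : ∀ v ∈ parab cs L, ℓ u ≤ ℓ (u * v))
    {v : W} (hv : v ∈ parab cs L) : ℓ (u * v) = ℓ u + ℓ v := by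
  obtain ⟨β, hβL, hβ, rfl⟩ := exists_reduced_word_of_mem_parab hv
  induction β using reverseRecOn with
  | nil => simp
  | append_singleton β i ih =>
    have hβL' : ∀ b ∈ β, b ∈ L := fun b hb => hβL b (mem_append_left _ hb)
    have hβ' : cs.IsReduced β := by simpa using hβ.take β.length
    have ih' := ih hβL' hβ' (wordProd_mem_parab hβL')
    have hlen : ℓ (π β * s i) = ℓ (π β) + 1 := by
      rw [← wordProd_singleton, ← wordProd_append, hβ.eq, hβ'.eq, length_append, length_singleton]
    rw [wordProd_append, wordProd_singleton, ← mul_assoc, hlen]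
    refine (cs.length_mul_simple (u * π β) i).elim (by omega) fun hlt => ?_
    exfalso
    obtain ⟨α, hα, rfl⟩ := cs.exists_isReduced u
    rcases cs.exists_eraseIdx_append_of_length_mul_simple_lt (α := α) (β := β) (i := i) (by omega)
      with ⟨j, hj, heq⟩ | ⟨j, hj, heq⟩
    · have hmem : π β * s i * (π β)⁻¹ ∈ parab cs L :=
        mul_mem (mul_mem (wordProd_mem_parab hβL') (simple_mem_parab (hβL i (by simp))))
          (inv_mem (wordProd_mem_parab hβL'))
      have hle := hu _ hmem
      have : π α * (π β * s i * (π β)⁻¹) = π (α.eraseIdx j) := by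
        rw [← mul_assoc, ← mul_assoc, heq, mul_inv_cancel_right]
      rw [this] at hle
      have := cs.length_wordProd_le (α.eraseIdx j)
      have := length_eraseIdx_add_one hj
      rw [hα.eq] at hle
      omega
    · have := cs.length_wordProd_le (β.eraseIdx j)
      have := length_eraseIdx_add_one hj
      rw [← heq, hlen, hβ'.eq] at *
      omega

theorem exists_length_mul_add (L : Set B) (w : W) :
    ∃ v₀ ∈ parab cs L, ∀ v ∈ parab cs L, ℓ (w * v₀ * v) = ℓ (w * v₀) + ℓ v := by
  set v₀ := Function.argminOn (fun v => ℓ (w * v)) (parab cs L : Set W) ⟨1, one_mem _⟩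
  have hv₀ : v₀ ∈ parab cs L := Function.argminOn_mem _ _ _
  refine ⟨v₀, hv₀, fun v hv => length_mul_of_forall_length_le (fun v' hv' => ?_) hv⟩
  rw [mul_assoc]
  exact Function.argminOn_le (fun v => ℓ (w * v)) (parab cs L : Set W) (mul_mem hv₀ hv')

theorem length_mul_of_mem_minReps {u : W} (hu : u ∈ minReps cs L) {v : W}
    (hv : v ∈ parab cs L) : ℓ (u * v) = ℓ u + ℓ v := by
  obtain ⟨v₀, hv₀, hadd⟩ := cs.exists_length_mul_add L u
  have hv₀' : v₀⁻¹ ∈ minReps cs L := by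
    intro i hi
    have h₁ := hadd _ (mul_mem (inv_mem hv₀) (simple_mem_parab hi))
    have h₂ := hadd _ (inv_mem hv₀)
    have h₃ := hu i hi
    simp only [mul_inv_cancel_right, ← mul_assoc] at h₁ h₂
    omega
  have hv₀1 : v₀ = 1 := inv_eq_one.mp (eq_one_of_mem_parab_of_mem_minReps (inv_mem hv₀) hv₀')
  simpa [hv₀1] using hadd v hv

theorem exists_minReps_mul (L : Set B) (w : W) :
    ∃ u ∈ minReps cs L, ∃ v ∈ parab cs L, w = u * v := by
  obtain ⟨v₀, hv₀, hadd⟩ := cs.exists_length_mul_add L w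
  refine ⟨w * v₀, fun i hi => ?_, v₀⁻¹, inv_mem hv₀, by group⟩
  rw [hadd _ (simple_mem_parab hi), length_simple]
  omega

theorem minReps_mul_inj {u u' v v' : W} (hu : u ∈ minReps cs L) (hu' : u' ∈ minReps cs L)
    (hv : v ∈ parab cs L) (hv' : v' ∈ parab cs L) (h : u * v = u' * v') : u = u' ∧ v = v' := by
  have hmem : u'⁻¹ * u ∈ parab cs L := by
    rw [show u'⁻¹ * u = v' * v⁻¹ by rw [eq_mul_inv_iff_mul_eq, mul_assoc, h]; group]
    exact mul_mem hv' (inv_mem hv)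
  have h₁ := length_mul_of_mem_minReps hu' hmem
  have h₂ := length_mul_of_mem_minReps hu (inv_mem hmem)
  simp only [mul_inv_cancel_left, mul_inv_rev, inv_inv] at h₁ h₂
  have huu' : u = u' := (inv_mul_eq_one.mp (cs.length_eq_zero_iff.mp (by omega))).symm
  subst huu'
  exact ⟨rfl, mul_left_cancel h⟩

end Parabolic

theorem length_mul_inv_of_leR {g z d e : W} (hgz : ℓ (g * z⁻¹) = ℓ g + ℓ z) (hd : leR cs d g)
    (he : leR cs e z) : ℓ (d * e⁻¹) = ℓ d + ℓ e := by
  have h₁ := cs.length_mul_le (g * d⁻¹ * (d * e⁻¹)) (z * e⁻¹)⁻¹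
  have h₂ := cs.length_mul_le (g * d⁻¹) (d * e⁻¹)
  have h₃ := cs.length_mul_le d e⁻¹
  rw [show g * d⁻¹ * (d * e⁻¹) * (z * e⁻¹)⁻¹ = g * z⁻¹ by group, length_inv] at h₁
  rw [length_inv] at h₃
  unfold leR at hd he
  omega

end CoxeterSystem

namespace GoodSetup

open CoxeterSystem List

variable {cs : CoxeterSystem M W} {I J K : Set B} {σ : W → W}

local prefix:100 "s" => cs.simple
local prefix:100 "π" => cs.wordProd
local prefix:100 "ℓ" => cs.length

theorem simple_not_mem_parab_left (h : GoodSetup cs I J K σ) {b : B} (hb : b ∈ J ∪ K) :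
    s b ∉ parab cs I := by
  intro hmem
  have hne : s b ≠ 1 := fun h1 => by simpa [h1] using cs.length_simple b
  rcases hb with hb | hb
  · exact hne (h.directProd _ hmem _ (simple_mem_parab hb) 1 (one_mem _) (by simp)).1
  · exact hne (h.directProd _ hmem 1 (one_mem _) _ (simple_mem_parab hb) (by simp)).1

theorem simple_not_mem_parab_union (h : GoodSetup cs I J K σ) {b : B} (hb : b ∈ K) :
    s b ∉ parab cs (I ∪ J) := by
  intro hmem
  have hne : s b ≠ 1 := fun h1 => by simpa [h1] using cs.length_simple b
  obtain ⟨x, hx, y, hy, hxy⟩ := exists_mul_of_mem_parab_union h.commIJ hmem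
  exact hne (h.directProd x hx y hy _ (simple_mem_parab hb) (by rw [← hxy]; simp)).2.2

theorem length_mul_of_mem_parab_left (h : GoodSetup cs I J K σ) {x y : W}
    (hx : x ∈ parab cs I) (hy : y ∈ parab cs (J ∪ K)) : ℓ (x * y) = ℓ x + ℓ y :=
  length_mul_of_mem_minReps (mem_minReps_of_mem_parab hx fun _ => h.simple_not_mem_parab_left) hy

theorem length_mul_mul (h : GoodSetup cs I J K σ) {x y z : W} (hx : x ∈ parab cs I)
    (hy : y ∈ parab cs J) (hz : z ∈ parab cs K) : ℓ (x * y * z) = ℓ x + ℓ y + ℓ z := by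
  have hxy : x * y ∈ parab cs (I ∪ J) :=
    mul_mem (parab_mono Set.subset_union_left hx) (parab_mono Set.subset_union_right hy)
  rw [length_mul_of_mem_minReps (mem_minReps_of_mem_parab hxy fun _ => h.simple_not_mem_parab_union)
    hz, h.length_mul_of_mem_parab_left hx (parab_mono Set.subset_union_left hy)]

theorem exists_mul_mul (h : GoodSetup cs I J K σ) {g : W} (hg : g ∈ parab cs (I ∪ J ∪ K)) :
    ∃ x ∈ parab cs I, ∃ y ∈ parab cs J, ∃ z ∈ parab cs K, g = x * y * z := by
  have hc : ∀ p ∈ I ∪ J, ∀ q ∈ K, Commute (s p) (s q) := by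
    rintro p (hp | hp) q hq
    exacts [h.commIK p hp q hq, h.commJK p hp q hq]
  obtain ⟨xy, hxy, z, hz, rfl⟩ := exists_mul_of_mem_parab_union hc hg
  obtain ⟨x, hx, y, hy, rfl⟩ := exists_mul_of_mem_parab_union h.commIJ hxy
  exact ⟨x, hx, y, hy, z, hz, rfl⟩

theorem map_one (h : GoodSetup cs I J K σ) : σ 1 = 1 := by
  simpa using h.mulSigma 1 (one_mem _) 1 (one_mem _)

theorem map_inv (h : GoodSetup cs I J K σ) {x : W} (hx : x ∈ parab cs I) : σ x⁻¹ = (σ x)⁻¹ :=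
  eq_inv_of_mul_eq_one_left (by rw [← h.mulSigma _ (inv_mem hx) _ hx, inv_mul_cancel, h.map_one])

theorem exists_word_map_wordProd (h : GoodSetup cs I J K σ) {ω : List B}
    (hω : ∀ i ∈ ω, i ∈ I) : ∃ ν : List B, ν.length = ω.length ∧
      (∀ b ∈ ν, ∃ i ∈ I, σ (s i) = s b) ∧ σ (π ω) = π ν := by
  induction ω with
  | nil => exact ⟨[], rfl, by simp, h.map_one⟩
  | cons i ω ih =>
    have hω' : ∀ b ∈ ω, b ∈ I := fun b hb => hω b (mem_cons_of_mem i hb)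
    obtain ⟨ν, hlen, hν, hπ⟩ := ih hω'
    obtain ⟨j, -, hj⟩ := h.simpleSigma i (hω i mem_cons_self)
    refine ⟨j :: ν, by simp [hlen], ?_, ?_⟩
    · rintro b (_ | ⟨_, hb⟩)
      exacts [⟨i, hω i mem_cons_self, hj⟩, hν b hb]
    · rw [wordProd_cons, wordProd_cons, h.mulSigma _ (simple_mem_parab (hω i mem_cons_self)) _
        (wordProd_mem_parab hω'), hj, hπ]

theorem exists_simple_map_eq (h : GoodSetup cs I J K σ) {j : B} (hj : j ∈ J) :
    ∃ i ∈ I, σ (s i) = s j := by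
  obtain ⟨x, hx, hxj⟩ := h.bijSigma.surjOn (simple_mem_parab hj)
  obtain ⟨ω, hωI, -, rfl⟩ := exists_reduced_word_of_mem_parab hx
  obtain ⟨ν, -, hν, hπ⟩ := h.exists_word_map_wordProd hωI
  rw [hxj] at hπ
  obtain ⟨ν', hsub, hred, hprod⟩ := cs.exists_reduced_sublist ν
  have hlen : ν'.length = 1 := by rw [← hred.eq, hprod, ← hπ, length_simple]
  obtain ⟨b, rfl⟩ := length_eq_one_iff.mp hlen
  obtain ⟨i, hi, hib⟩ := hν b (hsub.subset (mem_singleton_self b))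
  exact ⟨i, hi, by rw [hib, ← wordProd_singleton, hprod, hπ]⟩

theorem exists_map_eq_wordProd (h : GoodSetup cs I J K σ) {ν : List B}
    (hν : ∀ j ∈ ν, j ∈ J) : ∃ x ∈ parab cs I, σ x = π ν ∧ ℓ x ≤ ν.length := by
  induction ν with
  | nil => exact ⟨1, one_mem _, h.map_one, by simp⟩
  | cons j ν ih =>
    obtain ⟨x, hx, hσx, hlen⟩ := ih fun b hb => hν b (mem_cons_of_mem j hb)
    obtain ⟨i, hi, hij⟩ := h.exists_simple_map_eq (hν j mem_cons_self)
    refine ⟨s i * x, mul_mem (simple_mem_parab hi) hx, ?_, ?_⟩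
    · rw [h.mulSigma _ (simple_mem_parab hi) _ hx, hij, hσx, wordProd_cons]
    · have := cs.length_mul_le (s i) x
      rw [length_simple] at this
      simp only [length_cons]
      omega

theorem length_map (h : GoodSetup cs I J K σ) {x : W} (hx : x ∈ parab cs I) :
    ℓ (σ x) = ℓ x := by
  obtain ⟨ω, hωI, hω, rfl⟩ := exists_reduced_word_of_mem_parab hx
  obtain ⟨ν, hlen, -, hπ⟩ := h.exists_word_map_wordProd hωI
  obtain ⟨ν', hν'J, hν', hπ'⟩ := exists_reduced_word_of_mem_parab (h.bijSigma.mapsTo hx)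
  obtain ⟨x', hx', hσx', hlen'⟩ := h.exists_map_eq_wordProd hν'J
  have hxx' : x' = π ω := h.bijSigma.injOn hx' hx (hσx'.trans hπ')
  have h₁ := cs.length_wordProd_le ν
  have h₂ : ℓ (π ν) = ν'.length := by rw [← hπ, ← hπ', hν'.eq]
  rw [hxx', hω.eq] at hlen'
  rw [hπ, hω.eq]
  omega

theorem leR_map_iff (h : GoodSetup cs I J K σ) {z z' : W} (hz : z ∈ parab cs I)
    (hz' : z' ∈ parab cs I) : leR cs (σ z') (σ z) ↔ leR cs z' z := by
  rw [leR, leR, ← h.map_inv hz', ← h.mulSigma _ hz _ (inv_mem hz'), h.length_map hz,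
    h.length_map (mul_mem hz (inv_mem hz')), h.length_map hz']

theorem leR_mul_mul (h : GoodSetup cs I J K σ) {d₁ d₂ d₃ g g' : W} (hd₁ : d₁ ∈ parab cs I)
    (hd₂ : d₂ ∈ parab cs J) (hd₃ : d₃ ∈ parab cs K) (hg : g ∈ parab cs I)
    (hg' : g' ∈ parab cs J) (hR : leR cs (d₁ * d₂ * d₃) (g * g')) :
    leR cs d₁ g ∧ leR cs d₂ g' ∧ d₃ = 1 := by
  have hcomm₁ : Commute d₃⁻¹ (d₂⁻¹ * d₁⁻¹) :=
    (commute_of_mem_parab h.commJK (inv_mem hd₂) (inv_mem hd₃)).symm.mul_right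
      (commute_of_mem_parab h.commIK (inv_mem hd₁) (inv_mem hd₃)).symm
  have hcomm₂ : Commute d₁⁻¹ (g' * d₂⁻¹) :=
    commute_of_mem_parab h.commIJ (inv_mem hd₁) (mul_mem hg' (inv_mem hd₂))
  have hquot : g * g' * (d₁ * d₂ * d₃)⁻¹ = g * d₁⁻¹ * (g' * d₂⁻¹) * d₃⁻¹ :=
    calc g * g' * (d₁ * d₂ * d₃)⁻¹ = g * g' * (d₃⁻¹ * (d₂⁻¹ * d₁⁻¹)) := by group
      _ = g * (g' * d₂⁻¹ * d₁⁻¹) * d₃⁻¹ := by rw [hcomm₁.eq]; group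
      _ = g * d₁⁻¹ * (g' * d₂⁻¹) * d₃⁻¹ := by rw [← hcomm₂.eq]; group
  unfold leR at hR ⊢
  rw [hquot, h.length_mul_mul (mul_mem hg (inv_mem hd₁)) (mul_mem hg' (inv_mem hd₂))
    (inv_mem hd₃), h.length_mul_mul hd₁ hd₂ hd₃, length_inv] at hR
  have hgg' : ℓ (g * g') = ℓ g + ℓ g' := by simpa using h.length_mul_mul hg hg' (one_mem _)
  have h₁ := cs.length_le_length_mul_add_right g d₁⁻¹
  have h₂ := cs.length_le_length_mul_add_right g' d₂⁻¹
  rw [length_inv] at h₁ h₂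
  exact ⟨by omega, by omega, cs.length_eq_zero_iff.mp (by omega)⟩

theorem exists_mul_of_mem_minReps_union (h : GoodSetup cs I J K σ) {w : W}
    (hw : w ∈ minReps cs (J ∪ K)) :
    ∃ e ∈ minReps cs (I ∪ J ∪ K), ∃ t ∈ parab cs I, w = e * t := by
  obtain ⟨e, he, v, hv, rfl⟩ := cs.exists_minReps_mul (I ∪ J ∪ K) w
  obtain ⟨x, hx, y, hy, z, hz, rfl⟩ := h.exists_mul_mul hv
  have hyz : y * z ∈ parab cs (J ∪ K) :=
    mul_mem (parab_mono Set.subset_union_left hy) (parab_mono Set.subset_union_right hz)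
  have hlen : ∀ {u}, u ∈ parab cs (J ∪ K) → ℓ (e * (x * u)) = ℓ e + (ℓ x + ℓ u) := fun hu => by
    rw [length_mul_of_mem_minReps he
        (mul_mem (parab_mono (by grind) hx) (parab_mono (by grind) hu)),
      h.length_mul_of_mem_parab_left hx hu]
  have hyz1 : y * z = 1 := eq_one_of_mem_parab_of_mem_minReps hyz fun m hm => by
    have h₁ := hw m hm
    rw [show e * (x * y * z) * s m = e * (x * (y * z * s m)) by group,
      show e * (x * y * z) = e * (x * (y * z)) by group, hlen hyz,
      hlen (mul_mem hyz (simple_mem_parab hm))] at h₁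
    omega
  exact ⟨e, he, x, hx, by rw [mul_assoc x, hyz1, mul_one]⟩

theorem exists_of_mem_Mset (h : GoodSetup cs I J K σ) {w : W} (hw : w ∈ Mset cs I J K σ) :
    ∃ e ∈ minReps cs (I ∪ J ∪ K), ∃ g ∈ parab cs I, ∃ z ∈ parab cs I,
      w = e * (g * σ z) ∧ ℓ (g * z⁻¹) = ℓ g + ℓ z := by
  obtain ⟨w₁, hw₁, ⟨a, ha, x, hx, rfl⟩, hlen⟩ := hw
  obtain ⟨e, he, t, ht, rfl⟩ := h.exists_mul_of_mem_minReps_union hw₁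
  have hσx := h.bijSigma.mapsTo hx
  have hcomm : Commute (x * σ x) a :=
    (commute_of_mem_parab h.commIK hx ha).mul_left (commute_of_mem_parab h.commJK hσx ha)
  have hrearr : e * t * a * (x * σ x) = e * (t * x * σ x * a) := by
    rw [mul_assoc (e * t), ← hcomm.eq]
    group
  rw [hrearr, length_mul_of_mem_minReps he (mul_mem (mul_mem (parab_mono (by grind)
      (mul_mem ht hx)) (parab_mono (by grind) hσx)) (parab_mono (by grind) ha)),
    h.length_mul_mul (mul_mem ht hx) hσx ha, h.length_map hx,
    length_mul_of_mem_minReps he (parab_mono (by grind) ht)] at hlen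
  have htri := cs.length_le_length_mul_add_right t x
  have ha1 : a = 1 := cs.length_eq_zero_iff.mp (by omega)
  refine ⟨e, he, t * x, mul_mem ht hx, x, hx, by rw [hrearr, ha1, mul_one], ?_⟩
  rw [mul_inv_cancel_right]
  omega

theorem mul_mem_Mset (h : GoodSetup cs I J K σ) {c g z : W} (hc : c ∈ minReps cs (I ∪ J ∪ K))
    (hg : g ∈ parab cs I) (hz : z ∈ parab cs I) (hgz : ℓ (g * z⁻¹) = ℓ g + ℓ z) :
    c * (g * σ z) ∈ Mset cs I J K σ := by
  have hgz' : g * z⁻¹ ∈ parab cs I := mul_mem hg (inv_mem hz)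
  have hlen : ∀ {u}, u ∈ parab cs (J ∪ K) → ℓ (c * (g * z⁻¹ * u)) = ℓ c + (ℓ (g * z⁻¹) + ℓ u) :=
    fun hu => by
      rw [length_mul_of_mem_minReps hc (mul_mem (parab_mono (by grind) hgz')
        (parab_mono (by grind) hu)), h.length_mul_of_mem_parab_left hgz' hu]
  refine ⟨c * (g * z⁻¹), fun m hm => ?_, ⟨1, one_mem _, z, hz, by group⟩, ?_⟩
  · have h₁ := hlen (one_mem _)
    rw [mul_one, length_one] at h₁
    rw [mul_assoc, hlen (simple_mem_parab hm), length_simple]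
    omega
  · have hσz := h.bijSigma.mapsTo hz
    rw [length_mul_of_mem_minReps hc (mul_mem (parab_mono (by grind) hg)
        (parab_mono (by grind) hσz)), length_mul_of_mem_minReps hc (parab_mono (by grind) hgz'),
      h.length_mul_of_mem_parab_left hg (parab_mono Set.subset_union_left hσz), h.length_map hz,
      hgz]

end GoodSetup

theorem statement_18_general (cs : CoxeterSystem M W) (I J K : Set B) (σ : W → W)
    (h : GoodSetup cs I J K σ) (w y a b c d : W)
    (hwM : w ∈ Mset cs I J K σ)
    (ha : a ∈ minReps cs (I ∪ J ∪ K)) (hb : b ∈ parab cs (I ∪ J ∪ K))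
    (hab : w = a * b)
    (hc : c ∈ minReps cs (I ∪ J ∪ K)) (hd : d ∈ parab cs (I ∪ J ∪ K))
    (hcd : y = c * d)
    (hR : leR cs d b) :
    y ∈ Mset cs I J K σ := by
  obtain ⟨e, he, g, hg, z, hz, rfl, hgz⟩ := h.exists_of_mem_Mset hwM
  have hσz := h.bijSigma.mapsTo hz
  obtain ⟨rfl, rfl⟩ := CoxeterSystem.minReps_mul_inj he ha
    (mul_mem (CoxeterSystem.parab_mono (by grind) hg) (CoxeterSystem.parab_mono (by grind) hσz))
    hb hab
  obtain ⟨d₁, hd₁, d₂, hd₂, d₃, hd₃, rfl⟩ := h.exists_mul_mul hd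
  obtain ⟨hd₁g, hd₂z, rfl⟩ := h.leR_mul_mul hd₁ hd₂ hd₃ hg hσz hR
  obtain ⟨z', hz', rfl⟩ := h.bijSigma.surjOn hd₂
  rw [h.leR_map_iff hz hz'] at hd₂z
  rw [hcd, mul_one]
  exact h.mul_mem_Mset hc hd₁ hz' (cs.length_mul_inv_of_leR hgz hd₁g hd₂z)

theorem statement_18 (cs : CoxeterSystem M W) (I J K : Set B) (σ : W → W)
    (h : GoodSetup cs I J K σ) (w y a b c d : W)
    (hwM : w ∈ Mset cs I J K σ)
    (ha : a ∈ minReps cs (I ∪ J ∪ K)) (hb : b ∈ parab cs (I ∪ J ∪ K))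
    (hab : w = a * b) (hlab : cs.length w = cs.length a + cs.length b)
    (hc : c ∈ minReps cs (I ∪ J ∪ K)) (hd : d ∈ parab cs (I ∪ J ∪ K))
    (hcd : y = c * d) (hlcd : cs.length y = cs.length c + cs.length d)
    (hR : leR cs d b) :
    y ∈ Mset cs I J K σ :=
  statement_18_general cs I J K σ h w y a b c d hwM ha hb hab hc hd hcd hR

end BruhatSetup
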